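/- arXiv:math/0407273 — 9 statements merged into one kernel-verified Lean document; each statement's English description precedes it below -/
import Mathlib

section
/- Let A be a normed ℝ-algebra (a normed ring that is also an ℝ-algebra with compatible norm), let a₀ ∈ A, and let (φ_t)_{t ∈ ℝ} be a family of ring homomorphisms A → A with φ₀ = id. Assume: (i) for every x ∈ A, φ_t(x) → x as t → 0; and (ii) there is a map L : A → A such that for every x ∈ A, t⁻¹ • (a₀ * φ_t(x) − x * a₀) → L(x) as t → 0 with t ≠ 0. Then L satisfies the (untwisted) Leibniz rule L(x * y) = L(x) * y + x * L(y) for all x, y ∈ A. -/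
open Filter Topology

/-- Let A be a normed ℝ-algebra, a₀ ∈ A, and (φ_t) a family of
ring homomorphisms A → A with φ₀ = id such that φ_t(x) → x as t → 0 and such
that t⁻¹ • (a₀ * φ_t(x) − x * a₀) converges to L(x) as t → 0 (t ≠ 0).
Then L satisfies the untwisted Leibniz rule. -/
theorem stmt4 (A : Type*) [NormedRing A] [NormedAlgebra ℝ A]
    (a₀ : A) (φ : ℝ → A →+* A) (hφ0 : φ 0 = RingHom.id A)
    (hcont : ∀ x : A, Tendsto (fun t : ℝ => φ t x) (𝓝 0) (𝓝 x))
    (L : A → A)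
    (hL : ∀ x : A,
      Tendsto (fun t : ℝ => t⁻¹ • (a₀ * φ t x - x * a₀)) (𝓝[≠] 0) (𝓝 (L x))) :
    ∀ x y : A, L (x * y) = L x * y + x * L y := by
  intro x y
  have key : Tendsto (fun t : ℝ => t⁻¹ • (a₀ * φ t (x * y) - x * y * a₀)) (𝓝[≠] 0)
      (𝓝 (L x * y + x * L y)) := by
    have h1 : Tendsto (fun t : ℝ => (t⁻¹ • (a₀ * φ t x - x * a₀)) * φ t y +
        x * (t⁻¹ • (a₀ * φ t y - y * a₀))) (𝓝[≠] 0) (𝓝 (L x * y + x * L y)) :=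
      ((hL x).mul ((hcont y).mono_left nhdsWithin_le_nhds)).add ((hL y).const_mul x)
    refine h1.congr fun t => ?_
    rw [smul_mul_assoc, mul_smul_comm, ← smul_add]
    congr 1
    rw [map_mul]
    noncomm_ring
  exact tendsto_nhds_unique (hL (x * y)) key
end

section
/- Let k be a commutative ring, A an associative unital k-algebra, M an (A,A)-bimodule, and S a finite index set. For each s ∈ S let φ_s : A → A be a ring homomorphism, let e_s : A → A be an additive map satisfying the twisted Leibniz rule e_s(x y) = e_s(x) φ_s(y) + x e_s(y), and let θˢ ∈ M satisfy θˢ • x = φ_s(x) • θˢ for all x ∈ A. Define d : A → M by d x := Σ_{s ∈ S} e_s(x) • θˢ. Then d satisfies the Leibniz rule d(x * y) = (d x) • y + x • (d y) for all x, y ∈ A. -/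
/-- Given, for each s in a finite index set S, a ring
endomorphism φ_s of A, an additive φ_s-twisted derivation e_s, and a bimodule
element θˢ with θˢ • x = φ_s(x) • θˢ, the map d x = Σ_s e_s(x) • θˢ satisfies
the Leibniz rule d(x y) = (d x) • y + x • (d y). -/
theorem stmt5 (k : Type*) (A : Type*) (M : Type*) (S : Type*)
    [CommRing k] [Ring A] [Algebra k A] [Fintype S]
    [AddCommGroup M] [Module A M] [Module Aᵐᵒᵖ M] [SMulCommClass A Aᵐᵒᵖ M]
    (φ : S → A →+* A) (e : S → A → A) (θ : S → M)
    (hadd : ∀ s : S, ∀ x y : A, e s (x + y) = e s x + e s y)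
    (hLeib : ∀ s : S, ∀ x y : A, e s (x * y) = e s x * φ s y + x * e s y)
    (hθ : ∀ s : S, ∀ x : A, MulOpposite.op x • θ s = φ s x • θ s) :
    ∀ x y : A,
      (∑ s : S, e s (x * y) • θ s)
        = MulOpposite.op y • (∑ s : S, e s x • θ s)
          + x • (∑ s : S, e s y • θ s) := by
  intro x y
  rw [Finset.smul_sum, Finset.smul_sum, ← Finset.sum_add_distrib]
  refine Finset.sum_congr rfl fun s _ => ?_
  rw [hLeib, add_smul, mul_smul, mul_smul, (smul_comm (e s x) (MulOpposite.op y) (θ s)).symm, hθ]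
end

section
/- In the Wess–Zumino setup on the quantum plane, the relation x • dx = (p*q) • (dx • x) holds in M, where p = r/q. -/
/-- The defining relation of the quantum plane: x*y = q • (y*x) in the free
complex algebra on two generators. -/
inductive qpRel (q : ℂ) : FreeAlgebra ℂ (Fin 2) → FreeAlgebra ℂ (Fin 2) → Prop
  | rel : qpRel q (FreeAlgebra.ι ℂ 0 * FreeAlgebra.ι ℂ 1)
      (q • (FreeAlgebra.ι ℂ 1 * FreeAlgebra.ι ℂ 0))

/-- The quantum plane: quotient of the free complex algebra on two generators
by the two-sided ideal generated by x*y − q • (y*x). -/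
abbrev QPlane (q : ℂ) : Type := RingQuot (qpRel q)

/-- The generator x of the quantum plane. -/
noncomputable def qpX (q : ℂ) : QPlane q :=
  RingQuot.mkAlgHom ℂ (qpRel q) (FreeAlgebra.ι ℂ 0)

/-- The generator y of the quantum plane. -/
noncomputable def qpY (q : ℂ) : QPlane q :=
  RingQuot.mkAlgHom ℂ (qpRel q) (FreeAlgebra.ι ℂ 1)

/-- In the Wess–Zumino setup on the quantum plane, x • dx = (p*q) • (dx • x). -/
theorem stmt8
    (q r : ℂ) (hq0 : q ≠ 0) (hq1 : q ≠ 1) (hqm1 : q ≠ -1)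
    (hr0 : r ≠ 0) (hr1 : r ≠ 1)
    (M : Type*) [AddCommGroup M] [Module ℂ M]
    [Module (QPlane q) M] [Module (QPlane q)ᵐᵒᵖ M]
    [SMulCommClass (QPlane q) (QPlane q)ᵐᵒᵖ M]
    [IsScalarTower ℂ (QPlane q) M] [IsScalarTower ℂ (QPlane q)ᵐᵒᵖ M]
    (φ₁ φ₂ : QPlane q ≃ₐ[ℂ] QPlane q)
    (hφ₁x : φ₁ (qpX q) = r⁻¹ • qpX q) (hφ₁y : φ₁ (qpY q) = r⁻¹ • qpY q)
    (hφ₂x : φ₂ (qpX q) = qpX q) (hφ₂y : φ₂ (qpY q) = r⁻¹ • qpY q)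
    (θ1 θ2 : M)
    (hθ₁ : ∀ w : QPlane q, MulOpposite.op w • θ1 = (φ₁ w) • θ1)
    (hθ₂ : ∀ w : QPlane q, MulOpposite.op w • θ2 = (φ₂ w) • θ2)
    (dx dy : M)
    (hdx : dx = (φ₁ (qpX q) - qpX q) • θ1 + (φ₂ (qpX q) - qpX q) • θ2)
    (hdy : dy = (φ₁ (qpY q) - qpY q) • θ1 + (φ₂ (qpY q) - qpY q) • θ2)
    (p : ℂ) (hp : p = r / q) :
    qpX q • dx = (p * q) • (MulOpposite.op (qpX q) • dx) := by
  subst hdx hp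
  rw [hφ₂x, sub_self, zero_smul, add_zero, hφ₁x]
  have hcomm : ∀ (c : ℂ) (a : QPlane q) (m : M), a • (c • m) = c • (a • m) := by
    intro c a m
    rw [← algebraMap_smul (QPlane q) c m, ← mul_smul, ← Algebra.commutes, mul_smul,
      algebraMap_smul]
  have hcomm' : ∀ (c : ℂ) (a : (QPlane q)ᵐᵒᵖ) (m : M), a • (c • m) = c • (a • m) := by
    intro c a m
    rw [← algebraMap_smul ((QPlane q)ᵐᵒᵖ) c m, ← mul_smul, ← Algebra.commutes, mul_smul,
      algebraMap_smul]
  have hd : (r⁻¹ • qpX q - qpX q) • θ1 = r⁻¹ • (qpX q • θ1) - qpX q • θ1 := by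
    rw [sub_smul, smul_assoc]
  rw [hd, smul_sub, smul_sub, hcomm, hcomm']
  have h2 : MulOpposite.op (qpX q) • (qpX q • θ1) = r⁻¹ • (qpX q • (qpX q • θ1)) := by
    rw [← smul_comm (qpX q) (MulOpposite.op (qpX q)) θ1, hθ₁, hφ₁x, smul_assoc, hcomm]
  rw [h2, div_mul_cancel₀ r hq0, smul_sub, smul_smul, smul_smul, smul_smul,
    mul_inv_cancel₀ hr0, one_mul, smul_smul, mul_inv_cancel₀ hr0, one_smul]
end

section
/- In the Wess–Zumino setup on the quantum plane, the relation y • dx = p • (dx • y) holds in M, where p = r/q. -/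
/-! Since `φ₂` fixes `x`, `dx = ((r⁻¹ - 1) • x) • θ¹`. Pushing `y` from the right of `dx` to its
left costs a factor `r⁻¹` to pass `θ¹` and a factor `q` to pass `x`, so `dx • y = (q / r) • (y • dx)`. -/

open MulOpposite

theorem qpX_mul_qpY (q : ℂ) : qpX q * qpY q = q • (qpY q * qpX q) := by
  simpa only [qpX, qpY, map_mul, map_smul] using RingQuot.mkAlgHom_rel ℂ (qpRel.rel (q := q))

theorem op_smul_smul_eq_of_mul_eq_smul_mul {R A M : Type*} [CommSemiring R] [Semiring A]
    [Algebra R A] [AddCommMonoid M] [Module R M] [Module A M] [Module Aᵐᵒᵖ M]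
    [SMulCommClass A Aᵐᵒᵖ M] [IsScalarTower R A M]
    (φ : A → A) {θ : M} (hθ : ∀ w : A, op w • θ = φ w • θ)
    {a b : A} {s q : R} (hb : φ b = s • b) (hab : a * b = q • (b * a)) :
    op b • a • θ = (s * q) • b • a • θ := by
  calc op b • a • θ = (a * φ b) • θ := by rw [← smul_comm a (op b) θ, hθ, mul_smul]
    _ = ((s * q) • (b * a)) • θ := by rw [hb, mul_smul_comm, hab, smul_smul s q]
    _ = (s * q) • b • a • θ := by rw [smul_assoc, mul_smul b a θ]

theorem stmt9_general
    (q r : ℂ) (hq0 : q ≠ 0)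
    (hr0 : r ≠ 0)
    (M : Type*) [AddCommGroup M] [Module ℂ M]
    [Module (QPlane q) M] [Module (QPlane q)ᵐᵒᵖ M]
    [SMulCommClass (QPlane q) (QPlane q)ᵐᵒᵖ M]
    [IsScalarTower ℂ (QPlane q) M]
    (φ₁ φ₂ : QPlane q ≃ₐ[ℂ] QPlane q)
    (hφ₁x : φ₁ (qpX q) = r⁻¹ • qpX q) (hφ₁y : φ₁ (qpY q) = r⁻¹ • qpY q)
    (hφ₂x : φ₂ (qpX q) = qpX q)
    (θ1 θ2 : M)
    (hθ₁ : ∀ w : QPlane q, MulOpposite.op w • θ1 = (φ₁ w) • θ1)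
    (dx : M)
    (hdx : dx = (φ₁ (qpX q) - qpX q) • θ1 + (φ₂ (qpX q) - qpX q) • θ2)
    (p : ℂ) (hp : p = r / q) :
    qpY q • dx = p • (MulOpposite.op (qpY q) • dx) := by
  have hdx₁ : dx = ((r⁻¹ - 1) • qpX q) • θ1 := by
    rw [hdx, hφ₁x, hφ₂x, sub_self, zero_smul, add_zero, sub_smul r⁻¹ 1 (qpX q), one_smul]
  have hcomm : ((r⁻¹ - 1) • qpX q) * qpY q = q • (qpY q * ((r⁻¹ - 1) • qpX q)) := by
    rw [smul_mul_assoc, qpX_mul_qpY, mul_smul_comm, smul_comm]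
  have hpq : p * (r⁻¹ * q) = 1 := by
    rw [hp]
    field_simp
  rw [hdx₁, op_smul_smul_eq_of_mul_eq_smul_mul φ₁ hθ₁ hφ₁y hcomm, ← mul_smul p, hpq, one_smul]

/-- In the Wess–Zumino setup on the quantum plane, y • dx = p • (dx • y). -/
theorem stmt9
    (q r : ℂ) (hq0 : q ≠ 0) (hq1 : q ≠ 1) (hqm1 : q ≠ -1)
    (hr0 : r ≠ 0) (hr1 : r ≠ 1)
    (M : Type*) [AddCommGroup M] [Module ℂ M]
    [Module (QPlane q) M] [Module (QPlane q)ᵐᵒᵖ M]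
    [SMulCommClass (QPlane q) (QPlane q)ᵐᵒᵖ M]
    [IsScalarTower ℂ (QPlane q) M] [IsScalarTower ℂ (QPlane q)ᵐᵒᵖ M]
    (φ₁ φ₂ : QPlane q ≃ₐ[ℂ] QPlane q)
    (hφ₁x : φ₁ (qpX q) = r⁻¹ • qpX q) (hφ₁y : φ₁ (qpY q) = r⁻¹ • qpY q)
    (hφ₂x : φ₂ (qpX q) = qpX q) (hφ₂y : φ₂ (qpY q) = r⁻¹ • qpY q)
    (θ1 θ2 : M)
    (hθ₁ : ∀ w : QPlane q, MulOpposite.op w • θ1 = (φ₁ w) • θ1)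
    (hθ₂ : ∀ w : QPlane q, MulOpposite.op w • θ2 = (φ₂ w) • θ2)
    (dx dy : M)
    (hdx : dx = (φ₁ (qpX q) - qpX q) • θ1 + (φ₂ (qpX q) - qpX q) • θ2)
    (hdy : dy = (φ₁ (qpY q) - qpY q) • θ1 + (φ₂ (qpY q) - qpY q) • θ2)
    (p : ℂ) (hp : p = r / q) :
    qpY q • dx = p • (MulOpposite.op (qpY q) • dx) :=
  stmt9_general q r hq0 hr0 M φ₁ φ₂ hφ₁x hφ₁y hφ₂x θ1 θ2 hθ₁ dx hdx p hp
end

section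
/- In the Wess–Zumino setup on the quantum plane, the relation y • dy = (p*q) • (dy • y) holds in M, where p = r/q. -/
/-- In the Wess–Zumino setup on the quantum plane, y • dy = (p*q) • (dy • y). -/
theorem stmt10
    (q r : ℂ) (hq0 : q ≠ 0) (hq1 : q ≠ 1) (hqm1 : q ≠ -1)
    (hr0 : r ≠ 0) (hr1 : r ≠ 1)
    (M : Type*) [AddCommGroup M] [Module ℂ M]
    [Module (QPlane q) M] [Module (QPlane q)ᵐᵒᵖ M]
    [SMulCommClass (QPlane q) (QPlane q)ᵐᵒᵖ M]
    [IsScalarTower ℂ (QPlane q) M] [IsScalarTower ℂ (QPlane q)ᵐᵒᵖ M]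
    (φ₁ φ₂ : QPlane q ≃ₐ[ℂ] QPlane q)
    (hφ₁x : φ₁ (qpX q) = r⁻¹ • qpX q) (hφ₁y : φ₁ (qpY q) = r⁻¹ • qpY q)
    (hφ₂x : φ₂ (qpX q) = qpX q) (hφ₂y : φ₂ (qpY q) = r⁻¹ • qpY q)
    (θ1 θ2 : M)
    (hθ₁ : ∀ w : QPlane q, MulOpposite.op w • θ1 = (φ₁ w) • θ1)
    (hθ₂ : ∀ w : QPlane q, MulOpposite.op w • θ2 = (φ₂ w) • θ2)
    (dx dy : M)
    (hdx : dx = (φ₁ (qpX q) - qpX q) • θ1 + (φ₂ (qpX q) - qpX q) • θ2)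
    (hdy : dy = (φ₁ (qpY q) - qpY q) • θ1 + (φ₂ (qpY q) - qpY q) • θ2)
    (p : ℂ) (hp : p = r / q) :
    qpY q • dy = (p * q) • (MulOpposite.op (qpY q) • dy) := by
  subst hp
  rw [div_mul_cancel₀ r hq0]
  subst hdy
  set y := qpY q with hy
  set a : QPlane q := r⁻¹ • y - y with ha
  rw [hφ₁y, hφ₂y, ← ha]
  have key : y * a = r • (a * (r⁻¹ • y)) := by
    simp only [ha, mul_sub, sub_mul, mul_smul_comm, smul_mul_assoc, smul_sub, smul_smul]
    rw [mul_inv_cancel₀ hr0, one_smul, ← mul_assoc, mul_inv_cancel₀ hr0, one_mul]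
  calc y • (a • θ1 + a • θ2)
      = (y * a) • θ1 + (y * a) • θ2 := by
        rw [smul_add, smul_smul, smul_smul]
    _ = r • ((a * (r⁻¹ • y)) • θ1 + (a * (r⁻¹ • y)) • θ2) := by
        rw [key, smul_add, smul_assoc, smul_assoc]
    _ = r • (MulOpposite.op y • (a • θ1 + a • θ2)) := by
        rw [smul_add (MulOpposite.op y), ← smul_comm a (MulOpposite.op y),
          ← smul_comm a (MulOpposite.op y), hθ₁, hθ₂, hφ₁y, hφ₂y,
          smul_smul a, smul_smul a]
end

section
/- In the Wess–Zumino setup on the quantum plane, the relation x • dy = q • (dy • x) + (p*q − 1) • (dx • y) holds in M, where p = r/q. -/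
/-- In the Wess–Zumino setup on the quantum plane, x • dy = q • (dy • x) + (p*q − 1) • (dx • y). -/
theorem stmt11
    (q r : ℂ) (hq0 : q ≠ 0) (hq1 : q ≠ 1) (hqm1 : q ≠ -1)
    (hr0 : r ≠ 0) (hr1 : r ≠ 1)
    (M : Type*) [AddCommGroup M] [Module ℂ M]
    [Module (QPlane q) M] [Module (QPlane q)ᵐᵒᵖ M]
    [SMulCommClass (QPlane q) (QPlane q)ᵐᵒᵖ M]
    [IsScalarTower ℂ (QPlane q) M] [IsScalarTower ℂ (QPlane q)ᵐᵒᵖ M]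
    (φ₁ φ₂ : QPlane q ≃ₐ[ℂ] QPlane q)
    (hφ₁x : φ₁ (qpX q) = r⁻¹ • qpX q) (hφ₁y : φ₁ (qpY q) = r⁻¹ • qpY q)
    (hφ₂x : φ₂ (qpX q) = qpX q) (hφ₂y : φ₂ (qpY q) = r⁻¹ • qpY q)
    (θ1 θ2 : M)
    (hθ₁ : ∀ w : QPlane q, MulOpposite.op w • θ1 = (φ₁ w) • θ1)
    (hθ₂ : ∀ w : QPlane q, MulOpposite.op w • θ2 = (φ₂ w) • θ2)
    (dx dy : M)
    (hdx : dx = (φ₁ (qpX q) - qpX q) • θ1 + (φ₂ (qpX q) - qpX q) • θ2)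
    (hdy : dy = (φ₁ (qpY q) - qpY q) • θ1 + (φ₂ (qpY q) - qpY q) • θ2)
    (p : ℂ) (hp : p = r / q) :
    qpX q • dy = q • (MulOpposite.op (qpX q) • dy) + (p * q - 1) • (MulOpposite.op (qpY q) • dx) := by
  haveI := SMulCommClass.symm (QPlane q) (QPlane q)ᵐᵒᵖ M
  have hxy : qpX q * qpY q = q • (qpY q * qpX q) := by
    rw [qpX, qpY, ← map_mul, ← map_mul, ← map_smul]
    exact RingQuot.mkAlgHom_rel ℂ qpRel.rel
  set x := qpX q with hx
  set y := qpY q with hy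
  set c : ℂ := r⁻¹ - 1 with hcdef
  have hc : ∀ z : QPlane q, r⁻¹ • z - z = c • z := by intro z; rw [hcdef]; module
  set u1 : M := (y * x) • θ1 with hu1
  set u2 : M := (y * x) • θ2 with hu2
  have key1 : x * (c • y) = (c * q) • (y * x) := by
    rw [mul_smul_comm, hxy, smul_smul]
  have key2 : (c • y) * (r⁻¹ • x) = (c * r⁻¹) • (y * x) := by
    rw [smul_mul_assoc, mul_smul_comm, smul_smul]
  have key3 : (c • x) * (r⁻¹ • y) = (c * r⁻¹ * q) • (y * x) := by
    rw [smul_mul_assoc, mul_smul_comm, smul_smul, hxy, smul_smul, mul_assoc]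
  have h1 : x • dy = (c * q) • u1 + (c * q) • u2 := by
    rw [hdy, hφ₁y, hφ₂y, hc, smul_add, ← mul_smul x (c • y) θ1,
      ← mul_smul x (c • y) θ2, key1, hu1, hu2, smul_assoc, smul_assoc]
  have h2 : MulOpposite.op x • dy = (c * r⁻¹) • u1 + c • u2 := by
    rw [hdy, hφ₁y, hφ₂y, hc, smul_add, smul_comm (MulOpposite.op x) (c • y) θ1,
      smul_comm (MulOpposite.op x) (c • y) θ2, hθ₁ x, hθ₂ x, hφ₁x, hφ₂x,
      ← mul_smul (c • y) (r⁻¹ • x) θ1, key2, hu1, smul_assoc,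
      ← mul_smul (c • y) x θ2, smul_mul_assoc, hu2, smul_assoc]
  have h3 : MulOpposite.op y • dx = (c * r⁻¹ * q) • u1 := by
    rw [hdx, hφ₁x, hφ₂x, hc, sub_self, zero_smul, add_zero,
      smul_comm (MulOpposite.op y) (c • x) θ1, hθ₁ y, hφ₁y,
      ← mul_smul (c • x) (r⁻¹ • y) θ1, key3, hu1, smul_assoc]
  rw [h1, h2, h3]
  clear_value u1 u2 c
  subst hp hcdef
  match_scalars <;> field_simp <;> ring
end

section
/- In the bicovariant-calculus setup on GL_{p,q}(2) with r = p*q, the element θ̃² := −r • (d • ϑ¹) + c • ϑ² satisfies θ̃² • a = r⁻¹ • (a • θ̃²), θ̃² • b = q⁻¹ • (b • θ̃²), θ̃² • c = p⁻¹ • (c • θ̃²), and θ̃² • d = d • θ̃² in Ω. -/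
/-- The defining relations of the quantum group GL_{p,q}(2) in the free
complex algebra on four generators a, b, c, d (indexed 0, 1, 2, 3):
a*b = p•(b*a), a*c = q•(c*a), b*c = (q*p⁻¹)•(c*b), b*d = q•(d*b),
c*d = p•(d*c), a*d = d*a + (p − q⁻¹)•(b*c). -/
inductive glRel (p q : ℂ) : FreeAlgebra ℂ (Fin 4) → FreeAlgebra ℂ (Fin 4) → Prop
  | ab : glRel p q (FreeAlgebra.ι ℂ 0 * FreeAlgebra.ι ℂ 1)
      (p • (FreeAlgebra.ι ℂ 1 * FreeAlgebra.ι ℂ 0))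
  | ac : glRel p q (FreeAlgebra.ι ℂ 0 * FreeAlgebra.ι ℂ 2)
      (q • (FreeAlgebra.ι ℂ 2 * FreeAlgebra.ι ℂ 0))
  | bc : glRel p q (FreeAlgebra.ι ℂ 1 * FreeAlgebra.ι ℂ 2)
      ((q * p⁻¹) • (FreeAlgebra.ι ℂ 2 * FreeAlgebra.ι ℂ 1))
  | bd : glRel p q (FreeAlgebra.ι ℂ 1 * FreeAlgebra.ι ℂ 3)
      (q • (FreeAlgebra.ι ℂ 3 * FreeAlgebra.ι ℂ 1))
  | cd : glRel p q (FreeAlgebra.ι ℂ 2 * FreeAlgebra.ι ℂ 3)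
      (p • (FreeAlgebra.ι ℂ 3 * FreeAlgebra.ι ℂ 2))
  | ad : glRel p q (FreeAlgebra.ι ℂ 0 * FreeAlgebra.ι ℂ 3)
      (FreeAlgebra.ι ℂ 3 * FreeAlgebra.ι ℂ 0
        + (p - q⁻¹) • (FreeAlgebra.ι ℂ 1 * FreeAlgebra.ι ℂ 2))

/-- The quantum group algebra GL_{p,q}(2): quotient of the free complex
algebra on generators a, b, c, d by the two-sided ideal generated by the
six defining relations. -/
abbrev GLpq (p q : ℂ) : Type := RingQuot (glRel p q)

/-- The generator a of GL_{p,q}(2). -/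
noncomputable def glA (p q : ℂ) : GLpq p q :=
  RingQuot.mkAlgHom ℂ (glRel p q) (FreeAlgebra.ι ℂ 0)

/-- The generator b of GL_{p,q}(2). -/
noncomputable def glB (p q : ℂ) : GLpq p q :=
  RingQuot.mkAlgHom ℂ (glRel p q) (FreeAlgebra.ι ℂ 1)

/-- The generator c of GL_{p,q}(2). -/
noncomputable def glC (p q : ℂ) : GLpq p q :=
  RingQuot.mkAlgHom ℂ (glRel p q) (FreeAlgebra.ι ℂ 2)

/-- The generator d of GL_{p,q}(2). -/
noncomputable def glD (p q : ℂ) : GLpq p q :=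
  RingQuot.mkAlgHom ℂ (glRel p q) (FreeAlgebra.ι ℂ 3)

/-- In the bicovariant-calculus setup on GL_{p,q}(2) with r = p*q, the element θ̃² = −r•(d•ϑ¹) + c•ϑ² satisfies θ̃²a = r⁻¹ a θ̃², θ̃²b = q⁻¹ b θ̃², θ̃²c = p⁻¹ c θ̃², θ̃²d = d θ̃². -/
theorem stmt14
    (p q : ℂ) (hp : p ≠ 0) (hq : q ≠ 0)
    (r : ℂ) (hr : r = p * q) (hr1 : r ≠ 1)
    (a b c d : GLpq p q)
    (ha : a = glA p q) (hb : b = glB p q) (hc : c = glC p q) (hd : d = glD p q)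
    (Ω : Type*) [AddCommGroup Ω] [Module ℂ Ω]
    [Module (GLpq p q) Ω] [Module (GLpq p q)ᵐᵒᵖ Ω]
    [SMulCommClass (GLpq p q) (GLpq p q)ᵐᵒᵖ Ω]
    [IsScalarTower ℂ (GLpq p q) Ω] [IsScalarTower ℂ (GLpq p q)ᵐᵒᵖ Ω]
    (ϑ1 ϑ2 ϑ3 ϑ4 : Ω)
    (h1a : MulOpposite.op a • ϑ1 = r⁻¹ • (a • ϑ1))
    (h1b : MulOpposite.op b • ϑ1 = b • ϑ1)
    (h2a : MulOpposite.op a • ϑ2 = (-(q - p⁻¹)) • (b • ϑ1) + p⁻¹ • (a • ϑ2))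
    (h2b : MulOpposite.op b • ϑ2 = p⁻¹ • (b • ϑ2))
    (h3a : MulOpposite.op a • ϑ3 = q⁻¹ • (a • ϑ3))
    (h3b : MulOpposite.op b • ϑ3 = (-(p - q⁻¹)) • (a • ϑ1) + q⁻¹ • (b • ϑ3))
    (h4a : MulOpposite.op a • ϑ4
      = (r⁻¹ * (1 - r) ^ 2) • (a • ϑ1) + a • ϑ4 + (r⁻¹ * (1 - r)) • (b • ϑ3))
    (h4b : MulOpposite.op b • ϑ4 = (r⁻¹ * (1 - r)) • (a • ϑ2) + r⁻¹ • (b • ϑ4))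
    (h1c : MulOpposite.op c • ϑ1 = r⁻¹ • (c • ϑ1))
    (h1d : MulOpposite.op d • ϑ1 = d • ϑ1)
    (h2c : MulOpposite.op c • ϑ2 = (-(q - p⁻¹)) • (d • ϑ1) + p⁻¹ • (c • ϑ2))
    (h2d : MulOpposite.op d • ϑ2 = p⁻¹ • (d • ϑ2))
    (h3c : MulOpposite.op c • ϑ3 = q⁻¹ • (c • ϑ3))
    (h3d : MulOpposite.op d • ϑ3 = (-(p - q⁻¹)) • (c • ϑ1) + q⁻¹ • (d • ϑ3))
    (h4c : MulOpposite.op c • ϑ4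
      = (r⁻¹ * (1 - r) ^ 2) • (c • ϑ1) + c • ϑ4 + (r⁻¹ * (1 - r)) • (d • ϑ3))
    (h4d : MulOpposite.op d • ϑ4 = (r⁻¹ * (1 - r)) • (c • ϑ2) + r⁻¹ • (d • ϑ4))
    (tθ2 : Ω) (hdef : tθ2 = (-r) • (d • ϑ1) + c • ϑ2) :
    MulOpposite.op a • tθ2 = r⁻¹ • (a • tθ2) ∧
    MulOpposite.op b • tθ2 = q⁻¹ • (b • tθ2) ∧
    MulOpposite.op c • tθ2 = p⁻¹ • (c • tθ2) ∧
    MulOpposite.op d • tθ2 = d • tθ2 := by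
  subst hr
  -- the defining relations of the algebra, transported to a, b, c, d
  have hab : a * b = p • (b * a) := by
    rw [ha, hb]
    simpa [glA, glB, map_mul, map_smul] using
      RingQuot.mkAlgHom_rel ℂ (glRel.ab (p := p) (q := q))
  have hac : a * c = q • (c * a) := by
    rw [ha, hc]
    simpa [glA, glC, map_mul, map_smul] using
      RingQuot.mkAlgHom_rel ℂ (glRel.ac (p := p) (q := q))
  have hbc : b * c = (q * p⁻¹) • (c * b) := by
    rw [hb, hc]
    simpa [glB, glC, map_mul, map_smul] using
      RingQuot.mkAlgHom_rel ℂ (glRel.bc (p := p) (q := q))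
  have hbd : b * d = q • (d * b) := by
    rw [hb, hd]
    simpa [glB, glD, map_mul, map_smul] using
      RingQuot.mkAlgHom_rel ℂ (glRel.bd (p := p) (q := q))
  have hcd : c * d = p • (d * c) := by
    rw [hc, hd]
    simpa [glC, glD, map_mul, map_smul] using
      RingQuot.mkAlgHom_rel ℂ (glRel.cd (p := p) (q := q))
  have had : a * d = d * a + (p - q⁻¹) • (b * c) := by
    rw [ha, hb, hc, hd]
    simpa [glA, glB, glC, glD, map_mul, map_add, map_smul] using
      RingQuot.mkAlgHom_rel ℂ (glRel.ad (p := p) (q := q))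
  -- derived relations putting products in canonical order
  have hda : d * a = a * d - (p - q⁻¹) • (b * c) := by rw [had]; abel
  have hca : c * a = q⁻¹ • (a * c) := by
    rw [hac, smul_smul, inv_mul_cancel₀ hq, one_smul]
  have hcb : c * b = (p * q⁻¹) • (b * c) := by
    rw [hbc, smul_smul, show p * q⁻¹ * (q * p⁻¹) = 1 by field_simp, one_smul]
  have hdb : d * b = q⁻¹ • (b * d) := by
    rw [hbd, smul_smul, inv_mul_cancel₀ hq, one_smul]
  have hdc : d * c = p⁻¹ • (c * d) := by
    rw [hcd, smul_smul, inv_mul_cancel₀ hp, one_smul]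
  -- commutation helpers
  have copz : ∀ (x : GLpq p q) (z : ℂ) (m : Ω),
      MulOpposite.op x • z • m = z • MulOpposite.op x • m :=
    fun x z m => (smul_comm z (MulOpposite.op x) m).symm
  have copu : ∀ (x u : GLpq p q) (m : Ω),
      MulOpposite.op x • u • m = u • MulOpposite.op x • m :=
    fun x u m => (smul_comm u (MulOpposite.op x) m).symm
  have cuz : ∀ (u : GLpq p q) (z : ℂ) (m : Ω), u • z • m = z • u • m :=
    fun u z m => (smul_comm z u m).symm
  subst hdef
  refine ⟨?_, ?_, ?_, ?_⟩
  · -- θ̃² • a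
    rw [smul_add (MulOpposite.op a), copz a (-(p * q)) (d • ϑ1), copu a d ϑ1,
      copu a c ϑ2, h1a, h2a]
    rw [cuz d (p * q)⁻¹ (a • ϑ1), ← mul_smul d a ϑ1, hda,
      smul_add c, cuz c (-(q - p⁻¹)) (b • ϑ1), ← mul_smul c b ϑ1, hcb,
      cuz c p⁻¹ (a • ϑ2), ← mul_smul c a ϑ2, hca]
    rw [smul_add a, cuz a (-(p * q)) (d • ϑ1), ← mul_smul a d ϑ1, ← mul_smul a c ϑ2]
    rw [sub_smul, smul_assoc (p - q⁻¹) (b * c) ϑ1, smul_assoc (p * q⁻¹) (b * c) ϑ1,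
      smul_assoc q⁻¹ (a * c) ϑ2]
    generalize (a * d) • ϑ1 = v1
    generalize (b * c) • ϑ1 = v2
    generalize (a * c) • ϑ2 = v3
    match_scalars <;> field_simp <;> ring
  · -- θ̃² • b
    rw [smul_add (MulOpposite.op b), copz b (-(p * q)) (d • ϑ1), copu b d ϑ1,
      copu b c ϑ2, h1b, h2b]
    rw [← mul_smul d b ϑ1, hdb,
      cuz c p⁻¹ (b • ϑ2), ← mul_smul c b ϑ2, hcb]
    rw [smul_add b, cuz b (-(p * q)) (d • ϑ1), ← mul_smul b d ϑ1, ← mul_smul b c ϑ2]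
    rw [smul_assoc q⁻¹ (b * d) ϑ1, smul_assoc (p * q⁻¹) (b * c) ϑ2]
    generalize (b * d) • ϑ1 = v1
    generalize (b * c) • ϑ2 = v2
    match_scalars <;> field_simp <;> ring
  · -- θ̃² • c
    rw [smul_add (MulOpposite.op c), copz c (-(p * q)) (d • ϑ1), copu c d ϑ1,
      copu c c ϑ2, h1c, h2c]
    rw [cuz d (p * q)⁻¹ (c • ϑ1), ← mul_smul d c ϑ1, hdc,
      smul_add c, cuz c (-(q - p⁻¹)) (d • ϑ1), ← mul_smul c d ϑ1,
      cuz c p⁻¹ (c • ϑ2), ← mul_smul c c ϑ2]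
    rw [smul_add c, cuz c (-(p * q)) (d • ϑ1), ← mul_smul c d ϑ1, ← mul_smul c c ϑ2]
    rw [smul_assoc p⁻¹ (c * d) ϑ1]
    generalize (c * d) • ϑ1 = v1
    generalize (c * c) • ϑ2 = v2
    match_scalars <;> field_simp <;> ring
  · -- θ̃² • d
    rw [smul_add (MulOpposite.op d), copz d (-(p * q)) (d • ϑ1), copu d d ϑ1,
      copu d c ϑ2, h1d, h2d]
    rw [← mul_smul d d ϑ1, cuz c p⁻¹ (d • ϑ2), ← mul_smul c d ϑ2]
    rw [smul_add d, cuz d (-(p * q)) (d • ϑ1), ← mul_smul d d ϑ1, ← mul_smul d c ϑ2,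
      hdc, smul_assoc p⁻¹ (c * d) ϑ2]
end

section
/- In the bicovariant-calculus setup on GL_{p,q}(2) with r = p*q, the element θ̃³ := a • ϑ¹ + b • ϑ³ satisfies θ̃³ • a = r⁻¹ • (a • θ̃³), θ̃³ • b = q⁻¹ • (b • θ̃³), θ̃³ • c = p⁻¹ • (c • θ̃³), and θ̃³ • d = d • θ̃³ in Ω. -/
set_option maxRecDepth 10000 in
set_option maxHeartbeats 1000000 in
/-- In the bicovariant-calculus setup on GL_{p,q}(2) with r = p*q, the element θ̃³ = a•ϑ¹ + b•ϑ³ satisfies θ̃³a = r⁻¹ a θ̃³, θ̃³b = q⁻¹ b θ̃³, θ̃³c = p⁻¹ c θ̃³, θ̃³d = d θ̃³. -/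
theorem stmt15
    (p q : ℂ) (hp : p ≠ 0) (hq : q ≠ 0)
    (r : ℂ) (hr : r = p * q) (hr1 : r ≠ 1)
    (a b c d : GLpq p q)
    (ha : a = glA p q) (hb : b = glB p q) (hc : c = glC p q) (hd : d = glD p q)
    (Ω : Type*) [AddCommGroup Ω] [Module ℂ Ω]
    [Module (GLpq p q) Ω] [Module (GLpq p q)ᵐᵒᵖ Ω]
    [SMulCommClass (GLpq p q) (GLpq p q)ᵐᵒᵖ Ω]
    [IsScalarTower ℂ (GLpq p q) Ω] [IsScalarTower ℂ (GLpq p q)ᵐᵒᵖ Ω]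
    (ϑ1 ϑ2 ϑ3 ϑ4 : Ω)
    (h1a : MulOpposite.op a • ϑ1 = r⁻¹ • (a • ϑ1))
    (h1b : MulOpposite.op b • ϑ1 = b • ϑ1)
    (h2a : MulOpposite.op a • ϑ2 = (-(q - p⁻¹)) • (b • ϑ1) + p⁻¹ • (a • ϑ2))
    (h2b : MulOpposite.op b • ϑ2 = p⁻¹ • (b • ϑ2))
    (h3a : MulOpposite.op a • ϑ3 = q⁻¹ • (a • ϑ3))
    (h3b : MulOpposite.op b • ϑ3 = (-(p - q⁻¹)) • (a • ϑ1) + q⁻¹ • (b • ϑ3))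
    (h4a : MulOpposite.op a • ϑ4
      = (r⁻¹ * (1 - r) ^ 2) • (a • ϑ1) + a • ϑ4 + (r⁻¹ * (1 - r)) • (b • ϑ3))
    (h4b : MulOpposite.op b • ϑ4 = (r⁻¹ * (1 - r)) • (a • ϑ2) + r⁻¹ • (b • ϑ4))
    (h1c : MulOpposite.op c • ϑ1 = r⁻¹ • (c • ϑ1))
    (h1d : MulOpposite.op d • ϑ1 = d • ϑ1)
    (h2c : MulOpposite.op c • ϑ2 = (-(q - p⁻¹)) • (d • ϑ1) + p⁻¹ • (c • ϑ2))
    (h2d : MulOpposite.op d • ϑ2 = p⁻¹ • (d • ϑ2))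
    (h3c : MulOpposite.op c • ϑ3 = q⁻¹ • (c • ϑ3))
    (h3d : MulOpposite.op d • ϑ3 = (-(p - q⁻¹)) • (c • ϑ1) + q⁻¹ • (d • ϑ3))
    (h4c : MulOpposite.op c • ϑ4
      = (r⁻¹ * (1 - r) ^ 2) • (c • ϑ1) + c • ϑ4 + (r⁻¹ * (1 - r)) • (d • ϑ3))
    (h4d : MulOpposite.op d • ϑ4 = (r⁻¹ * (1 - r)) • (c • ϑ2) + r⁻¹ • (d • ϑ4))
    (tθ3 : Ω) (hdef : tθ3 = a • ϑ1 + b • ϑ3) :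
    MulOpposite.op a • tθ3 = r⁻¹ • (a • tθ3) ∧
    MulOpposite.op b • tθ3 = q⁻¹ • (b • tθ3) ∧
    MulOpposite.op c • tθ3 = p⁻¹ • (c • tθ3) ∧
    MulOpposite.op d • tθ3 = d • tθ3 := by
  -- algebra relations
  have hAB : a * b = p • (b * a) := by
    rw [ha, hb, glA, glB]; simp only [← map_mul, ← map_smul]
    exact RingQuot.mkAlgHom_rel ℂ glRel.ab
  have hAC : a * c = q • (c * a) := by
    rw [ha, hc, glA, glC]; simp only [← map_mul, ← map_smul]
    exact RingQuot.mkAlgHom_rel ℂ glRel.ac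
  have hBC : b * c = (q * p⁻¹) • (c * b) := by
    rw [hb, hc, glB, glC]; simp only [← map_mul, ← map_smul]
    exact RingQuot.mkAlgHom_rel ℂ glRel.bc
  have hBD : b * d = q • (d * b) := by
    rw [hb, hd, glB, glD]; simp only [← map_mul, ← map_smul]
    exact RingQuot.mkAlgHom_rel ℂ glRel.bd
  have hAD : a * d = d * a + (p - q⁻¹) • (b * c) := by
    rw [ha, hd, glA, glD, hb, hc, glB, glC]; simp only [← map_mul, ← map_smul, ← map_add]
    exact RingQuot.mkAlgHom_rel ℂ glRel.ad
  -- scalar commuting helper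
  have hcs : ∀ (s : ℂ) (x : GLpq p q) (m : Ω), x • (s • m) = s • (x • m) := by
    intro s x m
    have : x • (s • m) = x • ((s • (1 : GLpq p q)) • m) := by
      rw [smul_assoc, one_smul]
    rw [this, ← mul_smul, mul_smul_comm, mul_one, smul_assoc]
  -- commutation of generators acting on Ω
  have hab' : ∀ m : Ω, a • (b • m) = p • (b • (a • m)) := by
    intro m; rw [← mul_smul, hAB, smul_assoc, mul_smul]
  have hca' : ∀ m : Ω, c • (a • m) = q⁻¹ • (a • (c • m)) := by
    intro m
    rw [← mul_smul, ← mul_smul, hAC, smul_assoc, smul_smul, inv_mul_cancel₀ hq, one_smul]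
  have hcb' : ∀ m : Ω, c • (b • m) = (p * q⁻¹) • (b • (c • m)) := by
    intro m
    have hone : p * q⁻¹ * (q * p⁻¹) = 1 := by field_simp
    rw [← mul_smul, ← mul_smul, hBC, smul_assoc, smul_smul, hone, one_smul]
  have hdb' : ∀ m : Ω, d • (b • m) = q⁻¹ • (b • (d • m)) := by
    intro m
    rw [← mul_smul, ← mul_smul, hBD, smul_assoc, smul_smul, inv_mul_cancel₀ hq, one_smul]
  have hda' : ∀ m : Ω, d • (a • m) = a • (d • m) - (p - q⁻¹) • (b • (c • m)) := by
    intro m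
    rw [eq_sub_iff_add_eq, ← mul_smul, ← mul_smul, ← mul_smul, hAD, add_smul, smul_assoc]
  subst hr
  have e1 : (p * q : ℂ)⁻¹ * p = q⁻¹ := by field_simp
  have e3 : (p : ℂ)⁻¹ * q⁻¹ = (p * q)⁻¹ := (mul_inv p q).symm
  have e4 : (p : ℂ)⁻¹ * (p * q⁻¹) = q⁻¹ := by field_simp
  refine ⟨?_, ?_, ?_, ?_⟩
  · -- op a
    rw [hdef, smul_add, ← smul_comm a (MulOpposite.op a) ϑ1,
      ← smul_comm b (MulOpposite.op a) ϑ3, h1a, h3a, hcs, hcs, smul_add,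
      hab' ϑ3, smul_add, smul_smul ((p*q)⁻¹) p, e1]
  · -- op b
    rw [hdef, smul_add, ← smul_comm a (MulOpposite.op b) ϑ1,
      ← smul_comm b (MulOpposite.op b) ϑ3, h1b, h3b, smul_add, hcs, hcs,
      hab' ϑ1, smul_add, ← add_assoc, ← add_smul]
    have : p + -(p - q⁻¹) = q⁻¹ := by ring
    rw [this, smul_add]
  · -- op c
    rw [hdef, smul_add, ← smul_comm a (MulOpposite.op c) ϑ1,
      ← smul_comm b (MulOpposite.op c) ϑ3, h1c, h3c, hcs, hcs, smul_add,
      hca' ϑ1, hcb' ϑ3, smul_add, smul_smul p⁻¹ q⁻¹, smul_smul p⁻¹ (p*q⁻¹), e3, e4]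
  · -- op d
    rw [hdef, smul_add, ← smul_comm a (MulOpposite.op d) ϑ1,
      ← smul_comm b (MulOpposite.op d) ϑ3, h1d, h3d, smul_add, hcs, hcs,
      smul_add, hda' ϑ1, hdb' ϑ3, neg_smul, sub_eq_add_neg]
    abel
end

section
/- In the bicovariant-calculus setup on GL_{p,q}(2) with r = p*q, the element θ̃⁴ := −p • ((d*a) • ϑ¹) + (c*a) • ϑ² − (p*q⁻¹) • ((b*d) • ϑ³) + (p*q⁻¹) • ((b*c) • ϑ⁴) satisfies θ̃⁴ • a = r⁻¹ • (a • θ̃⁴), θ̃⁴ • b = q⁻² • (b • θ̃⁴), θ̃⁴ • c = (q*p⁻¹) • (c • θ̃⁴), and θ̃⁴ • d = d • θ̃⁴ in Ω. -/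
/-- Auxiliary: the left action of `GLpq p q` on a module, as a plain function.
This is used to hide the `GLpq`-scalar action from scalar-matching tactics. -/
def glAct {p q : ℂ} {Ω : Type*} [AddCommGroup Ω] [Module ℂ Ω] [Module (GLpq p q) Ω]
    (u : GLpq p q) (m : Ω) : Ω := u • m

set_option maxHeartbeats 2000000 in
/-- In the bicovariant-calculus setup on GL_{p,q}(2) with r = p*q, the element θ̃⁴ = −p•((d*a)•ϑ¹) + (c*a)•ϑ² − (p*q⁻¹)•((b*d)•ϑ³) + (p*q⁻¹)•((b*c)•ϑ⁴) satisfies θ̃⁴a = r⁻¹ a θ̃⁴, θ̃⁴b = q⁻² b θ̃⁴, θ̃⁴c = (q*p⁻¹) c θ̃⁴, θ̃⁴d = d θ̃⁴. -/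
theorem stmt16
    (p q : ℂ) (hp : p ≠ 0) (hq : q ≠ 0)
    (r : ℂ) (hr : r = p * q) (hr1 : r ≠ 1)
    (a b c d : GLpq p q)
    (ha : a = glA p q) (hb : b = glB p q) (hc : c = glC p q) (hd : d = glD p q)
    (Ω : Type*) [AddCommGroup Ω] [Module ℂ Ω]
    [Module (GLpq p q) Ω] [Module (GLpq p q)ᵐᵒᵖ Ω]
    [SMulCommClass (GLpq p q) (GLpq p q)ᵐᵒᵖ Ω]
    [IsScalarTower ℂ (GLpq p q) Ω] [IsScalarTower ℂ (GLpq p q)ᵐᵒᵖ Ω]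
    (ϑ1 ϑ2 ϑ3 ϑ4 : Ω)
    (h1a : MulOpposite.op a • ϑ1 = r⁻¹ • (a • ϑ1))
    (h1b : MulOpposite.op b • ϑ1 = b • ϑ1)
    (h2a : MulOpposite.op a • ϑ2 = (-(q - p⁻¹)) • (b • ϑ1) + p⁻¹ • (a • ϑ2))
    (h2b : MulOpposite.op b • ϑ2 = p⁻¹ • (b • ϑ2))
    (h3a : MulOpposite.op a • ϑ3 = q⁻¹ • (a • ϑ3))
    (h3b : MulOpposite.op b • ϑ3 = (-(p - q⁻¹)) • (a • ϑ1) + q⁻¹ • (b • ϑ3))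
    (h4a : MulOpposite.op a • ϑ4
      = (r⁻¹ * (1 - r) ^ 2) • (a • ϑ1) + a • ϑ4 + (r⁻¹ * (1 - r)) • (b • ϑ3))
    (h4b : MulOpposite.op b • ϑ4 = (r⁻¹ * (1 - r)) • (a • ϑ2) + r⁻¹ • (b • ϑ4))
    (h1c : MulOpposite.op c • ϑ1 = r⁻¹ • (c • ϑ1))
    (h1d : MulOpposite.op d • ϑ1 = d • ϑ1)
    (h2c : MulOpposite.op c • ϑ2 = (-(q - p⁻¹)) • (d • ϑ1) + p⁻¹ • (c • ϑ2))
    (h2d : MulOpposite.op d • ϑ2 = p⁻¹ • (d • ϑ2))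
    (h3c : MulOpposite.op c • ϑ3 = q⁻¹ • (c • ϑ3))
    (h3d : MulOpposite.op d • ϑ3 = (-(p - q⁻¹)) • (c • ϑ1) + q⁻¹ • (d • ϑ3))
    (h4c : MulOpposite.op c • ϑ4
      = (r⁻¹ * (1 - r) ^ 2) • (c • ϑ1) + c • ϑ4 + (r⁻¹ * (1 - r)) • (d • ϑ3))
    (h4d : MulOpposite.op d • ϑ4 = (r⁻¹ * (1 - r)) • (c • ϑ2) + r⁻¹ • (d • ϑ4))
    (tθ4 : Ω) (hdef : tθ4 = (-p) • ((d * a) • ϑ1) + (c * a) • ϑ2 - (p * q⁻¹) • ((b * d) • ϑ3) + (p * q⁻¹) • ((b * c) • ϑ4)) :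
    MulOpposite.op a • tθ4 = r⁻¹ • (a • tθ4) ∧
    MulOpposite.op b • tθ4 = (q ^ 2)⁻¹ • (b • tθ4) ∧
    MulOpposite.op c • tθ4 = (q * p⁻¹) • (c • tθ4) ∧
    MulOpposite.op d • tθ4 = d • tθ4 := by
  subst hdef hr ha hb hc hd
  -- commutation relations in GL_{p,q}(2)
  have rab : glA p q * glB p q = p • (glB p q * glA p q) := by
    simpa only [glA, glB, map_mul, map_smul] using RingQuot.mkAlgHom_rel ℂ (glRel.ab (p := p) (q := q))
  have rac : glA p q * glC p q = q • (glC p q * glA p q) := by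
    simpa only [glA, glC, map_mul, map_smul] using RingQuot.mkAlgHom_rel ℂ (glRel.ac (p := p) (q := q))
  have rbc : glB p q * glC p q = (q * p⁻¹) • (glC p q * glB p q) := by
    simpa only [glB, glC, map_mul, map_smul] using RingQuot.mkAlgHom_rel ℂ (glRel.bc (p := p) (q := q))
  have rbd : glB p q * glD p q = q • (glD p q * glB p q) := by
    simpa only [glB, glD, map_mul, map_smul] using RingQuot.mkAlgHom_rel ℂ (glRel.bd (p := p) (q := q))
  have rcd : glC p q * glD p q = p • (glD p q * glC p q) := by
    simpa only [glC, glD, map_mul, map_smul] using RingQuot.mkAlgHom_rel ℂ (glRel.cd (p := p) (q := q))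
  have rad : glA p q * glD p q
      = glD p q * glA p q + (p - q⁻¹) • (glB p q * glC p q) := by
    simpa only [glA, glB, glC, glD, map_mul, map_smul, map_add] using
      RingQuot.mkAlgHom_rel ℂ (glRel.ad (p := p) (q := q))
  -- smul versions
  have sab : ∀ m : Ω, glA p q • glB p q • m = p • glB p q • glA p q • m := by
    intro m; rw [← mul_smul, rab, smul_assoc, mul_smul]
  have sac : ∀ m : Ω, glA p q • glC p q • m = q • glC p q • glA p q • m := by
    intro m; rw [← mul_smul, rac, smul_assoc, mul_smul]
  have sbc : ∀ m : Ω, glB p q • glC p q • m = (q * p⁻¹) • glC p q • glB p q • m := by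
    intro m; rw [← mul_smul, rbc, smul_assoc, mul_smul (glC p q) (glB p q)]
  have sbd : ∀ m : Ω, glB p q • glD p q • m = q • glD p q • glB p q • m := by
    intro m; rw [← mul_smul, rbd, smul_assoc, mul_smul]
  have scd : ∀ m : Ω, glC p q • glD p q • m = p • glD p q • glC p q • m := by
    intro m; rw [← mul_smul, rcd, smul_assoc, mul_smul]
  have sad : ∀ m : Ω, glA p q • glD p q • m
      = glD p q • glA p q • m + (p - q⁻¹) • glB p q • glC p q • m := by
    intro m; rw [← mul_smul, rad, add_smul, smul_assoc, mul_smul, mul_smul]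
  -- commuting the right action past left scalars
  have L1 : ∀ (x u : GLpq p q) (m : Ω),
      MulOpposite.op x • u • m = u • MulOpposite.op x • m := fun x u m =>
    (smul_comm u (MulOpposite.op x) m).symm
  have L2 : ∀ (x : GLpq p q) (s : ℂ) (m : Ω),
      MulOpposite.op x • s • m = s • MulOpposite.op x • m := fun x s m =>
    (smul_comm s (MulOpposite.op x) m).symm
  have L3 : ∀ (x : GLpq p q) (s : ℂ) (m : Ω),
      x • s • m = s • x • m := fun x s m => (smul_comm s x m).symm
  refine ⟨?_, ?_, ?_, ?_⟩ <;>
  · simp only [mul_smul, smul_add, smul_sub, smul_neg, neg_smul, L1, L2,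
      h1a, h1b, h1c, h1d, h2a, h2b, h2c, h2d, h3a, h3b, h3c, h3d,
      h4a, h4b, h4c, h4d, L3, sab, sac, sbc, sbd, scd, sad]
    simp only [show ∀ (u : GLpq p q) (m : Ω), u • m = glAct u m from fun _ _ => rfl]
    match_scalars <;> field_simp <;> ring
end
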